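/- Every realizable separator sequence is realized by a nested (laminar) family of mentions: for any finite set M of intervals over {1,…,n}, there exists a set M' of intervals with the same separator sequence as M such that any two intervals of M' are either disjoint or one contains the other. -/

import Mathlib

inductive Marker | S | E | C
deriving DecidableEq

/-- Separator sequence of a set of mentions (intervals). Gap `k` lies between word `k` and word `k+1`. -/
def sep (M : Set (ℕ × ℕ)) (k : ℕ) : Set Marker :=
  {m | (m = Marker.S ∧ ∃ p ∈ M, p.1 = k + 1) ∨
       (m = Marker.E ∧ ∃ p ∈ M, p.2 = k) ∨
       (m = Marker.C ∧ ∃ p ∈ M, p.1 ≤ k ∧ k + 1 ≤ p.2)}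

/-- `M` is a set of mentions over a sentence of `n` words. -/
def Valid (n : ℕ) (M : Set (ℕ × ℕ)) : Prop :=
  ∀ p ∈ M, 1 ≤ p.1 ∧ p.1 ≤ p.2 ∧ p.2 ≤ n

/-!
Uncross repeatedly. Replacing a crossing pair `[a, b], [c, d]` (`a < c ≤ b < d`) by `[a, d], [c, b]`
keeps the set of start points, the set of end points and the set of covered gaps, hence the
separator sequence; and it strictly decreases the potential `∑ a * b` over the family, because
`a * d + c * b < a * b + c * d` is `(c - a) * (d - b) > 0`. A family without crossing pairs is
laminar.
-/

def Crosses (p q : ℕ × ℕ) : Prop := p.1 < q.1 ∧ q.1 ≤ p.2 ∧ p.2 < q.2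

def IsLaminar (M : Set (ℕ × ℕ)) : Prop :=
  ∀ p ∈ M, ∀ q ∈ M,
    (p.2 < q.1 ∨ q.2 < p.1) ∨ (p.1 ≤ q.1 ∧ q.2 ≤ p.2) ∨ (q.1 ≤ p.1 ∧ p.2 ≤ q.2)

lemma isLaminar_of_forall_not_crosses {M : Set (ℕ × ℕ)}
    (h : ∀ p ∈ M, ∀ q ∈ M, ¬Crosses p q) : IsLaminar M := by
  intro p hp q hq
  have hpq := h p hp q hq
  have hqp := h q hq p hp
  unfold Crosses at hpq hqp
  omega

lemma sep_union (M N : Set (ℕ × ℕ)) : sep (M ∪ N) = sep M ⊔ sep N := by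
  funext k
  ext m
  cases m <;> simp [sep, or_and_right, exists_or]

lemma sep_uncross_pair {p q : ℕ × ℕ} (h : Crosses p q) :
    sep {(p.1, q.2), (q.1, p.2)} = sep {p, q} := by
  obtain ⟨hac, hcb, hbd⟩ := h
  funext k
  ext m
  cases m <;> simp [sep] <;> omega

lemma valid_union {n : ℕ} {M N : Set (ℕ × ℕ)} :
    Valid n (M ∪ N) ↔ Valid n M ∧ Valid n N :=
  ⟨fun h => ⟨fun p hp => h p (Or.inl hp), fun p hp => h p (Or.inr hp)⟩,
    fun h p hp => hp.elim (h.1 p) (h.2 p)⟩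

lemma valid_uncross_pair {n : ℕ} {p q : ℕ × ℕ} (hpq : Valid n {p, q}) (h : Crosses p q) :
    Valid n {(p.1, q.2), (q.1, p.2)} := by
  have hp := hpq p (by simp)
  have hq := hpq q (by simp)
  unfold Crosses at h
  intro r hr
  simp only [Set.mem_insert_iff, Set.mem_singleton_iff] at hr
  rcases hr with rfl | rfl <;> omega

def weight (F : Finset (ℕ × ℕ)) : ℕ := ∑ r ∈ F, r.1 * r.2

lemma weight_union_le (F G : Finset (ℕ × ℕ)) : weight (F ∪ G) ≤ weight F + weight G := by
  unfold weight
  rw [← Finset.sum_union_inter]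
  exact Nat.le_add_right _ _

lemma weight_uncross_pair_lt {p q : ℕ × ℕ} (h : Crosses p q) :
    weight {(p.1, q.2), (q.1, p.2)} < weight {p, q} := by
  obtain ⟨hac, hcb, hbd⟩ := h
  have hpq : p ≠ q := fun hpq => by rw [hpq] at hac; omega
  have hPQ : (p.1, q.2) ≠ (q.1, p.2) := by simp; omega
  simp only [weight, Finset.sum_pair hpq, Finset.sum_pair hPQ]
  nlinarith

def uncross (F : Finset (ℕ × ℕ)) (p q : ℕ × ℕ) : Finset (ℕ × ℕ) :=
  {(p.1, q.2), (q.1, p.2)} ∪ (F \ {p, q})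

section uncross

variable {F : Finset (ℕ × ℕ)} {p q : ℕ × ℕ}

lemma coe_uncross :
    (uncross F p q : Set (ℕ × ℕ)) = {(p.1, q.2), (q.1, p.2)} ∪ ↑(F \ {p, q}) := by
  rw [uncross, Finset.coe_union, Finset.coe_pair]

lemma coe_eq_pair_union (hp : p ∈ F) (hq : q ∈ F) :
    (F : Set (ℕ × ℕ)) = {p, q} ∪ ↑(F \ {p, q}) := by
  rw [← Finset.coe_pair, ← Finset.coe_union, Finset.union_sdiff_of_subset]
  exact Finset.insert_subset hp (Finset.singleton_subset_iff.2 hq)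

lemma sep_uncross (hp : p ∈ F) (hq : q ∈ F) (h : Crosses p q) :
    sep ↑(uncross F p q) = sep ↑F := by
  rw [coe_uncross, coe_eq_pair_union hp hq, sep_union, sep_union, sep_uncross_pair h]

lemma valid_uncross {n : ℕ} (hF : Valid n ↑F) (hp : p ∈ F) (hq : q ∈ F) (h : Crosses p q) :
    Valid n ↑(uncross F p q) := by
  rw [coe_eq_pair_union hp hq, valid_union] at hF
  rw [coe_uncross, valid_union]
  exact ⟨valid_uncross_pair hF.1 h, hF.2⟩

lemma weight_uncross_lt (hp : p ∈ F) (hq : q ∈ F) (h : Crosses p q) :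
    weight (uncross F p q) < weight F := by
  have hsplit : weight (F \ {p, q}) + weight {p, q} = weight F :=
    Finset.sum_sdiff (Finset.insert_subset hp (Finset.singleton_subset_iff.2 hq))
  have := weight_union_le {(p.1, q.2), (q.1, p.2)} (F \ {p, q})
  have := weight_uncross_pair_lt h
  unfold uncross
  omega

end uncross

theorem exists_laminar_of_finset {n : ℕ} (F : Finset (ℕ × ℕ)) (hF : Valid n ↑F) :
    ∃ F' : Finset (ℕ × ℕ), Valid n ↑F' ∧ sep ↑F' = sep ↑F ∧ IsLaminar ↑F' := by
  by_cases hcross : ∃ p ∈ F, ∃ q ∈ F, Crosses p q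
  · obtain ⟨p, hp, q, hq, hcr⟩ := hcross
    obtain ⟨F', hv, hs, hl⟩ := exists_laminar_of_finset (uncross F p q) (valid_uncross hF hp hq hcr)
    exact ⟨F', hv, hs.trans (sep_uncross hp hq hcr), hl⟩
  · push Not at hcross
    exact ⟨F, hF, rfl, isLaminar_of_forall_not_crosses hcross⟩
termination_by weight F
decreasing_by exact weight_uncross_lt hp hq hcr

theorem laminar_realization (n : ℕ) (M : Set (ℕ × ℕ)) (hfin : M.Finite) (hM : Valid n M) :
    ∃ M' : Set (ℕ × ℕ), Valid n M' ∧ sep M' = sep M ∧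
      ∀ p ∈ M', ∀ q ∈ M',
        (p.2 < q.1 ∨ q.2 < p.1) ∨ (p.1 ≤ q.1 ∧ q.2 ≤ p.2) ∨ (q.1 ≤ p.1 ∧ p.2 ≤ q.2) := by
  obtain ⟨F', hv, hs, hl⟩ := exists_laminar_of_finset hfin.toFinset (by simpa using hM)
  exact ⟨F', hv, by simpa using hs, hl⟩
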